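/- Let R = ⨁_{m≥0} R_m be a commutative graded algebra over a field, finitely generated and generated in degree 1 by R₁, and let ν : (⋃_m R_m \ {0}) → ℝ≥0 be a function satisfying ν(x·y) = ν(x) + ν(y) for homogeneous x, y with xy ≠ 0, and ν(x+y) ≥ min(ν(x), ν(y)) whenever x, y, x+y are nonzero homogeneous of the same degree. Define ν_m = inf{ν(x) : x ∈ R_m, x ≠ 0} for m with R_m ≠ 0. Then the limit lim_{m→∞} ν_m/m exists and equals inf_m ν_m/m; moreover if ν takes integer values on R₁ \ {0} then this limit equals ν₁ and in particular is an integer (assuming R_m ≠ 0 for all m ≥ 1). -/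

import Mathlib

open Filter Topology

/-!
Let `s = ν₁`. Every element of `𝒜 m` is a sum of products of `m` elements of `𝒜 1`, so the
two axioms give `ν ≥ m s` on `𝒜 m \ {0}`. Conversely, `A` is noetherian, so its nilradical is
nilpotent, and as `𝒜 m ≠ 0` for all `m` some `u ∈ 𝒜 1` is not nilpotent. Writing a nilpotent
`x ∈ 𝒜 1` as `(u + x) + (-u)` shows that `s` is already the infimum of `ν` over the
non-nilpotent elements of `𝒜 1`, and for those `x ^ m ≠ 0` and `ν (x ^ m) = m ν x`. Hence
`ν_m = m s` for every `m ≥ 1`. Finally, an infimum of integers bounded below is attained.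
-/

/-- `ν_m = sInf (valueSet (𝒜 m) ν)`. -/
def valueSet {k A : Type*} [Semiring k] [AddCommMonoid A] [Module k A] (M : Submodule k A)
    (ν : A → ℝ) : Set ℝ :=
  {r | ∃ x ∈ M, x ≠ 0 ∧ ν x = r}

theorem bddBelow_valueSet {k A : Type*} [Semiring k] [AddCommMonoid A] [Module k A] {ν : A → ℝ}
    (hν0 : ∀ x, 0 ≤ ν x) (M : Submodule k A) : BddBelow (valueSet M ν) :=
  ⟨0, by rintro _ ⟨x, -, -, rfl⟩; exact hν0 x⟩

structure IsHomogeneousValuation {k A : Type*} [CommSemiring k] [CommRing A] [Algebra k A]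
    (𝒜 : ℕ → Submodule k A) (ν : A → ℝ) : Prop where
  map_mul {m n : ℕ} {x y : A} : x ∈ 𝒜 m → y ∈ 𝒜 n → x * y ≠ 0 → ν (x * y) = ν x + ν y
  min_le_map_add {m : ℕ} {x y : A} : x ∈ 𝒜 m → y ∈ 𝒜 m → x ≠ 0 → y ≠ 0 → x + y ≠ 0 →
    min (ν x) (ν y) ≤ ν (x + y)

namespace IsHomogeneousValuation

section CommSemiring

variable {k A : Type*} [CommSemiring k] [CommRing A] [Algebra k A]
  {𝒜 : ℕ → Submodule k A} {ν : A → ℝ}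

theorem map_one [Nontrivial A] [SetLike.GradedOne 𝒜] (hν : IsHomogeneousValuation 𝒜 ν) :
    ν 1 = 0 := by
  have h := hν.map_mul (SetLike.one_mem_graded 𝒜) (SetLike.one_mem_graded 𝒜) (by simp)
  rw [mul_one] at h
  linarith

theorem map_pow [SetLike.GradedMonoid 𝒜] (hν : IsHomogeneousValuation 𝒜 ν) {i : ℕ} {x : A}
    (hx : x ∈ 𝒜 i) (hxn : ¬IsNilpotent x) (n : ℕ) : ν (x ^ n) = n * ν x := by
  have : Nontrivial A := ⟨⟨x, 0, fun h => hxn (h ▸ IsNilpotent.zero)⟩⟩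
  induction n with
  | zero => simp [hν.map_one]
  | succ n ih =>
    rw [pow_succ, hν.map_mul (SetLike.pow_mem_graded n hx) hx (fun h => hxn ⟨n + 1, by
      rw [pow_succ, h]⟩), ih]
    push_cast
    ring

theorem add_le_map_of_mem_mul [SetLike.GradedMul 𝒜] (hν : IsHomogeneousValuation 𝒜 ν)
    {i j : ℕ} {a b : ℝ} (ha : ∀ x ∈ 𝒜 i, x ≠ 0 → a ≤ ν x) (hb : ∀ y ∈ 𝒜 j, y ≠ 0 → b ≤ ν y)
    {f : A} (hf : f ∈ 𝒜 i * 𝒜 j) (hf0 : f ≠ 0) : a + b ≤ ν f := by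
  have hle : 𝒜 i * 𝒜 j ≤ 𝒜 (i + j) :=
    Submodule.mul_le.mpr fun _ hx _ hy => SetLike.mul_mem_graded hx hy
  induction hf using Submodule.mul_induction_on' with
  | mem_mul_mem x hx y hy =>
    have hx0 : x ≠ 0 := by rintro rfl; simp at hf0
    have hy0 : y ≠ 0 := by rintro rfl; simp at hf0
    rw [hν.map_mul hx hy hf0]
    exact add_le_add (ha x hx hx0) (hb y hy hy0)
  | add x hx y hy ihx ihy =>
    by_cases hx0 : x = 0
    · subst hx0; simpa using ihy (by simpa using hf0)
    by_cases hy0 : y = 0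
    · subst hy0; simpa using ihx (by simpa using hf0)
    exact (le_min (ihx hx0) (ihy hy0)).trans
      (hν.min_le_map_add (hle hx) (hle hy) hx0 hy0 hf0)

theorem natCast_mul_le_map_of_mem [SetLike.GradedMul 𝒜] (hν : IsHomogeneousValuation 𝒜 ν)
    (hgen : ∀ m : ℕ, 1 ≤ m → 𝒜 m = 𝒜 1 ^ m) {s : ℝ} (hs : ∀ x ∈ 𝒜 1, x ≠ 0 → s ≤ ν x)
    {m : ℕ} (hm : 1 ≤ m) : ∀ x ∈ 𝒜 m, x ≠ 0 → m * s ≤ ν x := by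
  induction m, hm using Nat.le_induction with
  | base => simpa using hs
  | succ m hm ih =>
    intro x hx hx0
    have hsplit : 𝒜 (m + 1) = 𝒜 m * 𝒜 1 := by
      rw [hgen (m + 1) (by omega), hgen m hm, pow_succ]
    push_cast
    rw [add_mul, one_mul]
    exact hν.add_le_map_of_mem_mul ih hs (hsplit ▸ hx) hx0

end CommSemiring

section CommRing

variable {k A : Type*} [CommRing k] [CommRing A] [Algebra k A]
  {𝒜 : ℕ → Submodule k A} {ν : A → ℝ}

/-- A nilpotent `x` of degree `m` is `(u + x) + (-u)` with both summands not nilpotent. -/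
theorem le_map_of_forall_not_isNilpotent (hν : IsHomogeneousValuation 𝒜 ν) {m : ℕ} {u : A}
    (hu : u ∈ 𝒜 m) (hun : ¬IsNilpotent u) {t : ℝ}
    (ht : ∀ y ∈ 𝒜 m, ¬IsNilpotent y → t ≤ ν y) {x : A} (hx : x ∈ 𝒜 m) (hx0 : x ≠ 0) :
    t ≤ ν x := by
  by_cases hxn : IsNilpotent x
  · have hux : ¬IsNilpotent (u + x) := fun h => hun (by
      simpa using (Commute.all _ _).isNilpotent_add h hxn.neg)
    have hneg : ¬IsNilpotent (-u) := fun h => hun (by simpa using h.neg)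
    have hmin := hν.min_le_map_add (Submodule.add_mem _ hu hx) (Submodule.neg_mem _ hu)
      (fun h => hux (h ▸ IsNilpotent.zero)) (fun h => hneg (h ▸ IsNilpotent.zero))
      (by rwa [add_neg_cancel_comm])
    rw [add_neg_cancel_comm] at hmin
    exact (le_min (ht _ (Submodule.add_mem _ hu hx) hux)
      (ht _ (Submodule.neg_mem _ hu) hneg)).trans hmin
  · exact ht x hx hxn

theorem csInf_valueSet_eq [SetLike.GradedMonoid 𝒜] (hν : IsHomogeneousValuation 𝒜 ν)
    (hν0 : ∀ x, 0 ≤ ν x) (hgen : ∀ m : ℕ, 1 ≤ m → 𝒜 m = 𝒜 1 ^ m) {u : A} (hu : u ∈ 𝒜 1)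
    (hun : ¬IsNilpotent u) {m : ℕ} (hm : 1 ≤ m) :
    sInf (valueSet (𝒜 m) ν) = m * sInf (valueSet (𝒜 1) ν) := by
  have hpow : ∀ x ∈ 𝒜 1, ¬IsNilpotent x → m * ν x ∈ valueSet (𝒜 m) ν := fun x hx hxn =>
    ⟨x ^ m, by simpa using SetLike.pow_mem_graded m hx, fun h => hxn ⟨m, h⟩,
      hν.map_pow hx hxn m⟩
  have hm0 : (0 : ℝ) < m := by exact_mod_cast hm
  apply le_antisymm
  · rw [← div_le_iff₀' hm0]
    refine le_csInf ⟨ν u, u, hu, fun h => hun (h ▸ IsNilpotent.zero), rfl⟩ ?_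
    rintro _ ⟨x, hx, hx0, rfl⟩
    refine hν.le_map_of_forall_not_isNilpotent hu hun (fun y hy hyn => ?_) hx hx0
    rw [div_le_iff₀' hm0]
    exact csInf_le (bddBelow_valueSet hν0 _) (hpow y hy hyn)
  · refine le_csInf ⟨_, hpow u hu hun⟩ ?_
    rintro _ ⟨x, hx, hx0, rfl⟩
    exact hν.natCast_mul_le_map_of_mem hgen
      (fun y hy hy0 => csInf_le (bddBelow_valueSet hν0 _) ⟨y, hy, hy0, rfl⟩) hm x hx hx0

end CommRing

end IsHomogeneousValuation

theorem Submodule.exists_not_isNilpotent_of_pow_ne_bot {k A : Type*} [CommSemiring k]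
    [CommRing A] [Algebra k A] [IsNoetherianRing A] (M : Submodule k A)
    (hM : ∀ n : ℕ, M ^ (n + 1) ≠ ⊥) : ∃ x ∈ M, ¬IsNilpotent x := by
  by_contra! h
  obtain ⟨N, hN⟩ := IsNoetherianRing.isNilpotent_nilradical A
  have hle : M ≤ (nilradical A).restrictScalars k := fun x hx => mem_nilradical.mpr (h x hx)
  apply hM N
  rw [eq_bot_iff]
  calc M ^ (N + 1) ≤ ((nilradical A).restrictScalars k) ^ (N + 1) := pow_le_pow_left' hle _
    _ = ((nilradical A) ^ (N + 1)).restrictScalars k :=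
      (Submodule.restrictScalars_pow N.succ_ne_zero).symm
    _ ≤ ((nilradical A) ^ N).restrictScalars k :=
      Submodule.restrictScalars_mono k (Ideal.pow_le_pow_right N.le_succ)
    _ = ⊥ := by rw [hN, Ideal.zero_eq_bot, Submodule.restrictScalars_bot]

theorem exists_int_eq_csInf_of_subset_range {S : Set ℝ} (hne : S.Nonempty) (hbdd : BddBelow S)
    (hS : S ⊆ Set.range ((↑) : ℤ → ℝ)) : ∃ z : ℤ, sInf S = z := by
  set T : Set ℤ := (↑) ⁻¹' S
  have hTne : T.Nonempty := by
    obtain ⟨r, hr⟩ := hne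
    obtain ⟨z, rfl⟩ := hS hr
    exact ⟨z, hr⟩
  have hTbdd : BddBelow T := by
    obtain ⟨b, hb⟩ := hbdd
    exact ⟨⌈b⌉, fun z hz => Int.ceil_le.mpr (hb hz)⟩
  refine ⟨sInf T, IsLeast.csInf_eq ⟨Int.csInf_mem hTne hTbdd, ?_⟩⟩
  rintro r hr
  obtain ⟨z, rfl⟩ := hS hr
  exact_mod_cast csInf_le hTbdd hr

/-- Abstraction of the rationality argument: `A` is a finitely generated graded algebra
generated in degree `1`, `ν` is a valuation-like function (order of vanishing along a
prime divisor) on homogeneous elements, and `νm m` is the minimal value of `ν` on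
nonzero elements of degree `m`.  Then `νm m / m` converges to its infimum, and if `ν`
takes integer values in degree `1` then this limit equals `νm 1`, an integer. -/
theorem stmt_1 {k : Type*} [Field k] {A : Type*} [CommRing A] [Algebra k A]
    (𝒜 : ℕ → Submodule k A) [GradedAlgebra 𝒜]
    (hfg : Algebra.FiniteType k A)
    (hgen : ∀ m : ℕ, 1 ≤ m → 𝒜 m = 𝒜 1 ^ m)
    (hnz : ∀ m : ℕ, 1 ≤ m → ∃ x ∈ 𝒜 m, x ≠ 0)
    (ν : A → ℝ) (hν0 : ∀ x : A, 0 ≤ ν x)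
    (hmul : ∀ (m n : ℕ) (x y : A), x ∈ 𝒜 m → y ∈ 𝒜 n → x * y ≠ 0 →
      ν (x * y) = ν x + ν y)
    (hadd : ∀ (m : ℕ) (x y : A), x ∈ 𝒜 m → y ∈ 𝒜 m → x ≠ 0 → y ≠ 0 → x + y ≠ 0 →
      min (ν x) (ν y) ≤ ν (x + y))
    (νm : ℕ → ℝ)
    (hνm : ∀ m : ℕ, 1 ≤ m → νm m = sInf {r : ℝ | ∃ x ∈ 𝒜 m, x ≠ 0 ∧ ν x = r}) :
    Tendsto (fun m : ℕ => νm m / m) atTop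
        (𝓝 (⨅ m : {m : ℕ // 1 ≤ m}, νm m.1 / (m.1 : ℝ))) ∧
      ((∀ x ∈ 𝒜 1, x ≠ 0 → ∃ z : ℤ, ν x = (z : ℝ)) →
        (⨅ m : {m : ℕ // 1 ≤ m}, νm m.1 / (m.1 : ℝ)) = νm 1 ∧
          ∃ z : ℤ, νm 1 = (z : ℝ)) := by
  have := Algebra.FiniteType.isNoetherianRing k A
  obtain ⟨u, hu, hun⟩ := (𝒜 1).exists_not_isNilpotent_of_pow_ne_bot fun n h => by
    obtain ⟨x, hx, hx0⟩ := hnz (n + 1) n.succ_pos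
    rw [hgen (n + 1) n.succ_pos, h] at hx
    exact hx0 ((Submodule.mem_bot k).mp hx)
  have hν : IsHomogeneousValuation 𝒜 ν := ⟨hmul _ _ _ _, hadd _ _ _⟩
  have hconst : ∀ m : ℕ, 1 ≤ m → νm m / m = νm 1 := fun m hm => by
    have hm0 : (m : ℝ) ≠ 0 := by positivity
    rw [hνm m hm, hνm 1 le_rfl, div_eq_iff hm0, mul_comm]
    exact hν.csInf_valueSet_eq hν0 hgen hu hun hm
  have hinf : ⨅ m : {m : ℕ // 1 ≤ m}, νm m.1 / (m.1 : ℝ) = νm 1 := by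
    have : Nonempty {m : ℕ // 1 ≤ m} := ⟨⟨1, le_rfl⟩⟩
    simp only [fun m : {m : ℕ // 1 ≤ m} => hconst m.1 m.2, ciInf_const]
  refine ⟨hinf ▸ tendsto_const_nhds.congr' ?_, fun hint => ⟨hinf, ?_⟩⟩
  · filter_upwards [eventually_ge_atTop 1] with m hm using (hconst m hm).symm
  · obtain ⟨x, hx, hx0⟩ := hnz 1 le_rfl
    rw [hνm 1 le_rfl]
    refine exists_int_eq_csInf_of_subset_range ⟨ν x, x, hx, hx0, rfl⟩ (bddBelow_valueSet hν0 _) ?_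
    rintro _ ⟨y, hy, hy0, rfl⟩
    obtain ⟨z, hz⟩ := hint y hy hy0
    exact ⟨z, hz.symm⟩
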